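/- Let Ω ⊆ ℂ be a domain with 0 ∈ Ω covered by the unit disk 𝔻. Then there exists at most one holomorphic covering map f : 𝔻 → Ω with f(0) = 0 and f'(0) = λ for some real λ > 0. That is, if f and g are both holomorphic covering maps from 𝔻 onto Ω fixing 0 with positive real derivative at 0, then f = g. -/

import Mathlib

/-!
Lifting `g` through the covering `f`, and `f` through `g`, gives holomorphic self-maps `h`, `k` of
the disk fixing `0` with `g = f ∘ h` and `f = g ∘ k`. Then `g'(0) = f'(0) h'(0)` and
`f'(0) = g'(0) k'(0)` with `f'(0), g'(0) > 0`, while `‖h'(0)‖, ‖k'(0)‖ ≤ 1` by the Schwarz lemma;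
hence `h'(0) = 1`, and the equality case of the Schwarz lemma makes `h` the identity.
-/

open CategoryTheory FundamentalGroupoid Metric Set

noncomputable def pi1map {X Y : Type} [TopologicalSpace X] [TopologicalSpace Y]
    (φ : C(X, Y)) (x : X) : FundamentalGroup X x →* FundamentalGroup Y (φ x) :=
  Functor.mapEnd (FundamentalGroupoid.mk x)
    (πₘ (TopCat.ofHom φ) : FundamentalGroupoid X ⥤ FundamentalGroupoid Y)

def IsCoveringOnto {E F : Type} [TopologicalSpace E] [TopologicalSpace F]
    (f : E → F) (U : Set E) (Ω : Set F) : Prop :=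
  Set.SurjOn f U Ω ∧
    ∃ h : Set.MapsTo f U Ω, IsCoveringMap (Set.MapsTo.restrict f U Ω h)

open Filter Topology

theorem exists_mem_nhds_injOn_of_isLocallyInjective_restrict {X Y : Type*} [TopologicalSpace X]
    {U : Set X} {Ω : Set Y} {f : X → Y} (hU : IsOpen U) (hfU : MapsTo f U Ω)
    (hf : IsLocallyInjective (hfU.restrict f U Ω)) {x : X} (hx : x ∈ U) :
    ∃ W ∈ 𝓝 x, InjOn f W := by
  obtain ⟨O, hO, hxO, hinj⟩ := hf ⟨x, hx⟩
  refine ⟨Subtype.val '' O, (hU.isOpenMap_subtype_val O hO).mem_nhds ⟨_, hxO, rfl⟩, ?_⟩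
  rintro _ ⟨a, ha, rfl⟩ _ ⟨b, hb, rfl⟩ hab
  exact congrArg Subtype.val (hinj ha hb (Subtype.ext hab))

theorem exists_continuousOn_lift_of_isCoveringMap_restrict {X Y : Type*} [TopologicalSpace X]
    [TopologicalSpace Y] {U : Set X} [SimplyConnectedSpace U] [LocallyPathConnectedSpace U]
    {Ω : Set Y} {f g : X → Y} (hfU : MapsTo f U Ω) (hf : IsCoveringMap (hfU.restrict f U Ω))
    (hg : ContinuousOn g U) (hgU : MapsTo g U Ω) {a e : X} (ha : a ∈ U) (he : e ∈ U)
    (hfe : f e = g a) :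
    ∃ h : X → X, ContinuousOn h U ∧ MapsTo h U U ∧ h a = e ∧ EqOn (f ∘ h) g U := by
  classical
  obtain ⟨H, ⟨hHa, hH⟩, -⟩ := hf.existsUnique_continuousMap_lifts
    ⟨hgU.restrict g U Ω, hg.mapsToRestrict hgU⟩ ⟨a, ha⟩ ⟨e, he⟩ (Subtype.ext hfe)
  refine ⟨fun x => if hx : x ∈ U then H ⟨x, hx⟩ else x, ?_, fun x hx => by simp [hx],
    by simp [ha, hHa], fun x hx => by simpa [hx] using congrArg Subtype.val (congrFun hH ⟨x, hx⟩)⟩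
  rw [continuousOn_iff_continuous_domRestrict]
  convert continuous_subtype_val.comp H.continuous using 1
  funext x
  simp [x.2]

section Holomorphic

variable {f g h : ℂ → ℂ}

theorem differentiableAt_of_comp_eq_of_hasStrictDerivAt {f' z : ℂ}
    (hf : HasStrictDerivAt f f' (h z)) (hf' : f' ≠ 0) (hh : ContinuousAt h z)
    (hg : DifferentiableAt ℂ g z) (hfh : ∀ᶠ x in 𝓝 z, f (h x) = g x) :
    DifferentiableAt ℂ h z := by
  set ψ := hf.localInverse f f' (h z) hf'
  have hψ : DifferentiableAt ℂ ψ (g z) :=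
    hfh.self_of_nhds ▸ (hf.to_localInverse hf').hasDerivAt.differentiableAt
  have hhψ : h =ᶠ[𝓝 z] ψ ∘ g := by
    filter_upwards [hh.tendsto.eventually (hf.eventually_left_inverse hf'), hfh] with x hx hfx
    rw [Function.comp_apply, ← hfx]
    exact hx.symm
  exact hhψ.differentiableAt_iff.2 (hψ.comp z hg)

theorem eventually_deriv_comp_ne_zero_of_injOn {z₀ : ℂ} (hf : AnalyticAt ℂ f (h z₀))
    (hh : ContinuousAt h z₀) (hfh : ∀ᶠ z in 𝓝 z₀, f (h z) = g z) {W : Set ℂ} (hW : W ∈ 𝓝 z₀)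
    (hg : InjOn g W) :
    ∀ᶠ z in 𝓝[≠] z₀, deriv f (h z) ≠ 0 := by
  have hfiber : ∀ᶠ z in 𝓝[≠] z₀, f (h z) ≠ f (h z₀) := by
    filter_upwards [eventually_nhdsWithin_of_eventually_nhds (hfh.and hW), self_mem_nhdsWithin]
      with z ⟨hz, hzW⟩ hne heq
    exact hne (hg hzW (mem_of_mem_nhds hW) (by rw [← hz, heq, hfh.self_of_nhds]))
  rcases hf.deriv.eventually_eq_zero_or_eventually_ne_zero with hzero | hne
  · obtain ⟨r, hr, hball⟩ := Metric.eventually_nhds_iff_ball.1 (hzero.and hf.eventually_analyticAt)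
    have hconst : ∀ w ∈ ball (h z₀) r, f w = f (h z₀) := fun w hw =>
      isOpen_ball.is_const_of_deriv_eq_zero (convex_ball _ _).isPreconnected
        (fun v hv => (hball v hv).2.differentiableAt.differentiableWithinAt)
        (fun v hv => (hball v hv).1) hw (mem_ball_self hr)
    obtain ⟨z, hz, hzr⟩ := (hfiber.and (eventually_nhdsWithin_of_eventually_nhds
      (hh.tendsto.eventually (ball_mem_nhds _ hr)))).exists
    exact absurd (hconst _ hzr) hz
  · have hne' : ∀ᶠ z in 𝓝[≠] z₀, h z ≠ h z₀ := hfiber.mono fun z hz heq => hz (by rw [heq])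
    exact (tendsto_nhdsWithin_of_tendsto_nhds_of_eventually_within h
      (hh.tendsto.mono_left nhdsWithin_le_nhds) hne').eventually hne

/-- Off the critical points of `f` this is the inverse function theorem; those points are isolated
and `h` is injective near each point, so the removable singularity theorem covers the rest. -/
theorem differentiableOn_of_comp_eqOn_of_locallyInjective {U V : Set ℂ} (hU : IsOpen U)
    (hf : AnalyticOnNhd ℂ f V) (hg : DifferentiableOn ℂ g U) (hh : ContinuousOn h U)
    (hhV : MapsTo h U V) (hfh : EqOn (f ∘ h) g U) (hginj : ∀ z ∈ U, ∃ W ∈ 𝓝 z, InjOn g W) :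
    DifferentiableOn ℂ h U := by
  intro z₀ hz₀
  obtain ⟨W, hW, hinj⟩ := hginj z₀ hz₀
  have hfh' : ∀ z ∈ U, ∀ᶠ x in 𝓝 z, f (h x) = g x := fun z hz =>
    eventually_of_mem (hU.mem_nhds hz) hfh
  refine (Complex.analyticAt_of_differentiable_on_punctured_nhds_of_continuousAt ?_
    (hh.continuousAt (hU.mem_nhds hz₀))).differentiableAt.differentiableWithinAt
  filter_upwards [eventually_deriv_comp_ne_zero_of_injOn (hf _ (hhV hz₀))
      (hh.continuousAt (hU.mem_nhds hz₀)) (hfh' z₀ hz₀) hW hinj,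
    eventually_nhdsWithin_of_eventually_nhds (hU.mem_nhds hz₀)] with z hz hzU
  exact differentiableAt_of_comp_eq_of_hasStrictDerivAt (hf _ (hhV hzU)).hasStrictDerivAt hz
    (hh.continuousAt (hU.mem_nhds hzU)) (hg.differentiableAt (hU.mem_nhds hzU)) (hfh' z hzU)

theorem exists_differentiableOn_lift {U Ω : Set ℂ} (hU : IsOpen U) [SimplyConnectedSpace U]
    (hf : DifferentiableOn ℂ f U) (hg : DifferentiableOn ℂ g U) (hfU : MapsTo f U Ω)
    (hfcov : IsCoveringMap (hfU.restrict f U Ω)) (hgU : MapsTo g U Ω)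
    (hginj : IsLocallyInjective (hgU.restrict g U Ω)) {a e : ℂ} (ha : a ∈ U) (he : e ∈ U)
    (hfe : f e = g a) :
    ∃ h : ℂ → ℂ, DifferentiableOn ℂ h U ∧ MapsTo h U U ∧ h a = e ∧ EqOn (f ∘ h) g U := by
  have := hU.locallyPathConnectedSpace
  obtain ⟨h, hhc, hhU, hha, hfh⟩ := exists_continuousOn_lift_of_isCoveringMap_restrict hfU hfcov
    hg.continuousOn hgU ha he hfe
  refine ⟨h, ?_, hhU, hha, hfh⟩
  exact differentiableOn_of_comp_eqOn_of_locallyInjective hU (hf.analyticOnNhd hU) hg hhc hhU hfh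
    fun _ hz => exists_mem_nhds_injOn_of_isLocallyInjective_restrict hU hgU hginj hz

theorem deriv_eq_mul_of_eqOn_comp {U : Set ℂ} {a b : ℂ} (hU : U ∈ 𝓝 a) (hfh : EqOn (f ∘ h) g U)
    (hab : h a = b) (hf : DifferentiableAt ℂ f b) (hh : DifferentiableAt ℂ h a) :
    deriv g a = deriv f b * deriv h a := by
  subst hab
  rw [← (eventuallyEq_of_mem hU hfh).deriv_eq, deriv_comp a hf hh]

theorem norm_deriv_le_one_of_mapsTo_ball_self {c : ℂ} {R : ℝ} (hR : 0 < R)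
    (hd : DifferentiableOn ℂ h (ball c R)) (hmaps : MapsTo h (ball c R) (ball c R))
    (hc : h c = c) : ‖deriv h c‖ ≤ 1 :=
  Complex.norm_deriv_le_one_of_mapsTo_ball hd
    (by rw [hc]; exact hmaps.mono_right ball_subset_closedBall) hR

theorem eqOn_id_of_mapsTo_ball_of_deriv_eq_one {c : ℂ} {R : ℝ}
    (hd : DifferentiableOn ℂ h (ball c R)) (hmaps : MapsTo h (ball c R) (ball c R))
    (hc : h c = c) (hderiv : deriv h c = 1) : EqOn h id (ball c R) := by
  intro z hz
  have hR : 0 < R := pos_of_mem_ball hz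
  have := Complex.affine_of_mapsTo_ball_of_norm_dslope_eq_div hd
    (by rw [hc]; exact hmaps.mono_right ball_subset_closedBall) (mem_ball_self hR)
    (by rw [dslope_same, hderiv, norm_one, div_self hR.ne'])
  simpa [hc, dslope_same, hderiv] using this hz

end Holomorphic

theorem eq_one_of_ofReal_eq_mul_of_norm_le_one {a b : ℝ} (ha : 0 < a) (hb : 0 < b) {u v : ℂ}
    (hu : ‖u‖ ≤ 1) (hv : ‖v‖ ≤ 1) (hbu : (b : ℂ) = a * u) (hav : (a : ℂ) = b * v) : u = 1 := by
  have hle : ∀ {x y : ℝ} {w : ℂ}, 0 < x → 0 < y → ‖w‖ ≤ 1 → (y : ℂ) = x * w → y ≤ x := by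
    intro x y w hx hy hw hxy
    have := congrArg norm hxy
    rw [norm_mul, Complex.norm_of_nonneg hx.le, Complex.norm_of_nonneg hy.le] at this
    nlinarith
  rw [le_antisymm (hle ha hb hu hbu) (hle hb ha hv hav)] at hbu
  exact mul_left_cancel₀ (Complex.ofReal_ne_zero.2 ha.ne') (hbu.symm.trans (mul_one _).symm)

theorem covering_map_unique_of_normalized_general
    (Ω : Set ℂ) (f g : ℂ → ℂ)
    (hfhol : DifferentiableOn ℂ f (ball (0 : ℂ) 1))
    (hghol : DifferentiableOn ℂ g (ball (0 : ℂ) 1))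
    (hfcov : IsCoveringOnto f (ball (0 : ℂ) 1) Ω)
    (hgcov : IsCoveringOnto g (ball (0 : ℂ) 1) Ω)
    (hf0 : f 0 = 0) (hg0 : g 0 = 0)
    (hfderiv : ∃ lam : ℝ, 0 < lam ∧ deriv f 0 = (lam : ℂ))
    (hgderiv : ∃ lam : ℝ, 0 < lam ∧ deriv g 0 = (lam : ℂ)) :
    Set.EqOn f g (ball (0 : ℂ) 1) := by
  obtain ⟨lf, hlf, hf'⟩ := hfderiv
  obtain ⟨lg, hlg, hg'⟩ := hgderiv
  obtain ⟨-, hfΩ, hfc⟩ := hfcov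
  obtain ⟨-, hgΩ, hgc⟩ := hgcov
  have := contractibleSpace_ball (x := (0 : ℂ)) one_pos
  have h0 : (0 : ℂ) ∈ ball (0 : ℂ) 1 := mem_ball_self one_pos
  have hD : ball (0 : ℂ) 1 ∈ 𝓝 0 := ball_mem_nhds 0 one_pos
  obtain ⟨h, hhd, hhD, hh0, hfh⟩ := exists_differentiableOn_lift isOpen_ball hfhol hghol hfΩ hfc
    hgΩ hgc.isLocalHomeomorph.isLocallyInjective h0 h0 (hf0.trans hg0.symm)
  obtain ⟨k, hkd, hkD, hk0, hgk⟩ := exists_differentiableOn_lift isOpen_ball hghol hfhol hgΩ hgc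
    hfΩ hfc.isLocalHomeomorph.isLocallyInjective h0 h0 (hg0.trans hf0.symm)
  have hh1 : deriv h 0 = 1 := by
    refine eq_one_of_ofReal_eq_mul_of_norm_le_one hlf hlg
      (norm_deriv_le_one_of_mapsTo_ball_self one_pos hhd hhD hh0)
      (norm_deriv_le_one_of_mapsTo_ball_self one_pos hkd hkD hk0) ?_ ?_
    · rw [← hf', ← hg', deriv_eq_mul_of_eqOn_comp hD hfh hh0 (hfhol.differentiableAt hD)
        (hhd.differentiableAt hD)]
    · rw [← hf', ← hg', deriv_eq_mul_of_eqOn_comp hD hgk hk0 (hghol.differentiableAt hD)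
        (hkd.differentiableAt hD)]
  intro z hz
  rw [← hfh hz, Function.comp_apply, eqOn_id_of_mapsTo_ball_of_deriv_eq_one hhd hhD hh0 hh1 hz,
    id]

/-- uniqueness of the normalized holomorphic covering map `𝔻 → Ω`
fixing `0` with positive real derivative at `0`. -/
theorem covering_map_unique_of_normalized
    (Ω : Set ℂ) (hΩopen : IsOpen Ω) (hΩconn : IsConnected Ω) (h0Ω : (0 : ℂ) ∈ Ω)
    (f g : ℂ → ℂ)
    (hfhol : DifferentiableOn ℂ f (ball (0 : ℂ) 1))
    (hghol : DifferentiableOn ℂ g (ball (0 : ℂ) 1))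
    (hfcov : IsCoveringOnto f (ball (0 : ℂ) 1) Ω)
    (hgcov : IsCoveringOnto g (ball (0 : ℂ) 1) Ω)
    (hf0 : f 0 = 0) (hg0 : g 0 = 0)
    (hfderiv : ∃ lam : ℝ, 0 < lam ∧ deriv f 0 = (lam : ℂ))
    (hgderiv : ∃ lam : ℝ, 0 < lam ∧ deriv g 0 = (lam : ℂ)) :
    Set.EqOn f g (ball (0 : ℂ) 1) :=
  covering_map_unique_of_normalized_general Ω f g hfhol hghol hfcov hgcov hf0 hg0 hfderiv hgderiv
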